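/- Let X=(V,E,T) be a 2-dimensional (k0,k1)-regular (ε,μ)-cosystolic expander with |V| ≥ max{4/(1−2λ̃₂), 3/μ}, where λ̃₂ = λ̃₂(G₀(X)) < 1/2, and let ∅ ≠ F ⊊ E be a subset of edges. Then for every non-fat vertex v ∈ V (i.e., |F_v| ≤ k₀/2), the coboundary of its local view satisfies |δ(F_v)| ≥ ε·k₁·|F_v|. -/

import Mathlib

open Finset

/-- Symmetric-difference distance between two finite sets. -/
def sdist {α : Type} [DecidableEq α] (A B : Finset α) : ℕ :=
  (A \ B).card + (B \ A).card

/-- Distance from a finite set to a family of finite sets. -/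
noncomputable def famDist {α : Type} [DecidableEq α] (A : Finset α) (Z : Set (Finset α)) : ℕ :=
  sInf {d | ∃ z ∈ Z, sdist A z = d}

/-- `E` and `T` form the edges and triangles of a 2-dimensional simplicial complex on `V`. -/
def IsComplex {V : Type} [DecidableEq V] (E T : Finset (Finset V)) : Prop :=
  (∀ e ∈ E, e.card = 2) ∧ (∀ t ∈ T, t.card = 3) ∧
    ∀ t ∈ T, ∀ e, e ⊆ t → e.card = 2 → e ∈ E

/-- The complex is `(k₀, k₁)`-regular. -/
def IsRegularComplex {V : Type} [Fintype V] [DecidableEq V]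
    (E T : Finset (Finset V)) (k₀ k₁ : ℕ) : Prop :=
  (∀ v : V, (E.filter (fun e => v ∈ e)).card = k₀) ∧
    ∀ e ∈ E, (T.filter (fun t => e ⊆ t)).card = k₁

/-- Coboundary of a set of vertices: edges with exactly one endpoint in `S`. -/
def delta0 {V : Type} [DecidableEq V] (E : Finset (Finset V)) (S : Finset V) :
    Finset (Finset V) :=
  E.filter (fun e => (e ∩ S).card = 1)

/-- Coboundary of a set of edges: triangles containing an odd number of edges of `F`. -/
def delta1 {V : Type} [DecidableEq V] (T F : Finset (Finset V)) : Finset (Finset V) :=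
  T.filter (fun t => Odd ((F.filter (fun e => e ⊆ t)).card))

/-- Local view of a vertex `v` with regard to a set of edges `F`. -/
def localView {V : Type} [DecidableEq V] (F : Finset (Finset V)) (v : V) :
    Finset (Finset V) :=
  F.filter (fun e => v ∈ e)

/-- The 0-cocycles. -/
def Z0 {V : Type} [DecidableEq V] (E : Finset (Finset V)) : Set (Finset V) :=
  {S | delta0 E S = ∅}

/-- The 1-coboundaries: coboundaries of vertex sets (cuts). -/
def B1 {V : Type} [Fintype V] [DecidableEq V] (E : Finset (Finset V)) :
    Set (Finset (Finset V)) :=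
  {B | ∃ S : Finset V, B = delta0 E S}

/-- The 1-cocycles: sets of edges with empty coboundary. -/
def Z1 {V : Type} [DecidableEq V] (E T : Finset (Finset V)) : Set (Finset (Finset V)) :=
  {F | F ⊆ E ∧ delta1 T F = ∅}

/-- `(ε, μ)`-cosystolic expansion of a `(k₀, k₁)`-regular 2-dimensional complex. -/
def IsCosystolicExpander {V : Type} [Fintype V] [DecidableEq V]
    (E T : Finset (Finset V)) (k₀ k₁ : ℕ) (ε μ : ℝ) : Prop :=
  (∀ S : Finset V,
      (delta0 E S = ∅ →
        S = ∅ ∨ S = Finset.univ ∨ μ * (Fintype.card V : ℝ) ≤ (S.card : ℝ)) ∧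
      (delta0 E S ≠ ∅ →
        ε * (k₀ : ℝ) * (famDist S (Z0 E) : ℝ) ≤ ((delta0 E S).card : ℝ))) ∧
  (∀ F : Finset (Finset V), F ⊆ E →
      (delta1 T F = ∅ → F ∈ B1 E ∨ μ * (E.card : ℝ) ≤ (F.card : ℝ)) ∧
      (delta1 T F ≠ ∅ →
        ε * (k₁ : ℝ) * (famDist F (Z1 E T) : ℝ) ≤ ((delta1 T F).card : ℝ)))

/-- The underlying graph `G₀(X)` of the complex. -/
def G0 {V : Type} [DecidableEq V] (E : Finset (Finset V)) : SimpleGraph V where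
  Adj u v := u ≠ v ∧ ({u, v} : Finset V) ∈ E
  symm := ⟨fun u v h => ⟨h.1.symm, by rw [Finset.pair_comm]; exact h.2⟩⟩
  loopless := ⟨fun v h => h.1 rfl⟩

instance {V : Type} [DecidableEq V] (E : Finset (Finset V)) : DecidableRel (G0 E).Adj :=
  fun _ _ => inferInstanceAs (Decidable (_ ∧ _))

/-- The edge-graph `G₁(X)` of the complex: vertices are the edges of `X`, two edges
adjacent iff their union is a triangle. -/
def EdgeGraph {V : Type} [DecidableEq V] (E T : Finset (Finset V)) :
    SimpleGraph {e // e ∈ E} where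
  Adj e f := e ≠ f ∧ (e.val ∪ f.val) ∈ T
  symm := ⟨fun e f h => ⟨h.1.symm, by rw [Finset.union_comm]; exact h.2⟩⟩
  loopless := ⟨fun e h => h.1 rfl⟩

instance {V : Type} [DecidableEq V] (E T : Finset (Finset V)) :
    DecidableRel (EdgeGraph E T).Adj :=
  fun _ _ => inferInstanceAs (Decidable (_ ∧ _))

lemma adjMatrix_isHermitian {α : Type} [Fintype α] (G : SimpleGraph α)
    [DecidableRel G.Adj] : (SimpleGraph.adjMatrix ℝ G).IsHermitian := by
  refine Matrix.IsHermitian.ext fun i j => ?_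
  simp [SimpleGraph.adjMatrix_apply, SimpleGraph.adj_comm]

/-- The eigenvalues of the adjacency matrix of `G`, sorted in ascending order. -/
noncomputable def eigsAsc {α : Type} [Fintype α] [DecidableEq α] (G : SimpleGraph α)
    [DecidableRel G.Adj] : List ℝ :=
  Multiset.sort
    ((Finset.univ : Finset α).val.map (adjMatrix_isHermitian G).eigenvalues) (· ≤ ·)

/-- The normalized `i`-th largest adjacency eigenvalue (1-indexed) of a `k`-regular
graph `G`: `λ̃ᵢ = λᵢ / k`. -/
noncomputable def normEig {α : Type} [Fintype α] [DecidableEq α] (G : SimpleGraph α)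
    [DecidableRel G.Adj] (k i : ℕ) : ℝ :=
  (eigsAsc G).getD (Fintype.card α - i) 0 / (k : ℝ)

/-- The number of edges of `G` with exactly one endpoint in `S` (counted via the
ordered pairs `(u, v)` with `u ∈ S`, `v ∉ S`, `u ~ v`). -/
def cutEdges {α : Type} [Fintype α] [DecidableEq α] (G : SimpleGraph α)
    [DecidableRel G.Adj] (S : Finset α) : ℕ :=
  ((S ×ˢ Sᶜ).filter fun p => G.Adj p.1 p.2).card

/-- The normalized Cheeger constant of a `k`-regular graph. -/
noncomputable def normCheeger {α : Type} [Fintype α] [DecidableEq α] (G : SimpleGraph α)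
    [DecidableRel G.Adj] (k : ℕ) : ℝ :=
  sInf {x : ℝ | ∃ S : Finset α, 0 < S.card ∧ (S.card : ℝ) ≤ (Fintype.card α : ℝ) / 2 ∧
    x = (cutEdges G S : ℝ) / ((k : ℝ) * (S.card : ℝ))}

/-- The random walk on the `d`-regular graph `G` is `a`-rapidly mixing: from any initial
distribution, after `i` steps of the walk (with transition matrix `(1/d) • A(G)`),
the ℓ₂ distance to the uniform distribution is at most `a ^ i`. -/
def WalkRapidMixing {α : Type} [Fintype α] [DecidableEq α] (G : SimpleGraph α)
    [DecidableRel G.Adj] (d : ℕ) (a : ℝ) : Prop :=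
  ∀ p₀ : α → ℝ, (∀ x, 0 ≤ p₀ x) → (∑ x, p₀ x = 1) → ∀ i : ℕ,
    Real.sqrt (∑ x, ((((d : ℝ)⁻¹ • SimpleGraph.adjMatrix ℝ G) ^ i).mulVec p₀ x
      - (Fintype.card α : ℝ)⁻¹) ^ 2) ≤ a ^ i


/-!
A nonzero 1-cocycle of `X` is either a nonempty cut `δ(S)` or has at least `μ|E| ≥ 3k₀/2` edges,
because `|V| ≥ 3/μ`. The cuts `δ({v})` and `δ(V \ {v})` have exactly `k₀` edges; any other
nonempty proper `S` has `|S|, |V \ S| ≥ 2`, and there the expander mixing bound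
`|V| |δ(S)| ≥ (k₀ - λ₂) |S| |V \ S|`, with `λ₂ = λ̃₂ k₀` and `|V| (1 - 2λ̃₂) ≥ 4`, again gives at
least `k₀` edges. So every nonzero cocycle lies at distance at least `k₀ - k₀/2 ≥ |F_v|` from
`F_v`. In particular `F_v` is a cocycle only if it is empty, and otherwise cosystolic expansion
gives `|δ(F_v)| ≥ ε k₁ dist(F_v, Z¹) ≥ ε k₁ |F_v|`.
-/

open Matrix

theorem List.Pairwise.countP_getElem_lt_le {l : List ℝ} (hl : l.Pairwise (· ≤ ·))
    (j : ℕ) (hj : j < l.length) : l.countP (fun x => l[j] < x) ≤ l.length - (j + 1) := by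
  induction l generalizing j with
  | nil => simp at hj
  | cons a l ih =>
    obtain ⟨ha, hl⟩ := List.pairwise_cons.mp hl
    cases j with
    | zero => simpa using List.countP_le_length
    | succ j =>
      have hj' : j < l.length := by simpa using hj
      have hnot : ¬ l[j] < a := not_lt.mpr (ha _ (List.getElem_mem hj'))
      simpa [List.countP_cons, hnot] using ih hl j hj'

namespace Matrix.IsHermitian

variable {n : Type*} [Fintype n] [DecidableEq n] {A : Matrix n n ℝ} (hA : A.IsHermitian)

theorem dotProduct_eq_sum_eigenvectorBasis (x y : n → ℝ) :
    x ⬝ᵥ y = ∑ i, (⇑(hA.eigenvectorBasis i) ⬝ᵥ x) * (⇑(hA.eigenvectorBasis i) ⬝ᵥ y) := by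
  have := hA.eigenvectorBasis.sum_inner_mul_inner (WithLp.toLp 2 y) (WithLp.toLp 2 x)
  simp only [EuclideanSpace.inner_eq_star_dotProduct, star_trivial] at this
  rw [← this]
  exact Finset.sum_congr rfl fun i _ => by rw [mul_comm, dotProduct_comm]

theorem eigenvectorBasis_dotProduct_mulVec (x : n → ℝ) (i : n) :
    ⇑(hA.eigenvectorBasis i) ⬝ᵥ (A *ᵥ x) =
      hA.eigenvalues i * (⇑(hA.eigenvectorBasis i) ⬝ᵥ x) := by
  rw [dotProduct_mulVec, ← mulVec_transpose, ← conjTranspose_eq_transpose_of_trivial, hA.eq,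
    hA.mulVec_eigenvectorBasis, smul_dotProduct, smul_eq_mul]

theorem dotProduct_mulVec_le_of_dotProduct_eigenvector_eq_zero {lam k : ℝ}
    (hlam : #{i | lam < hA.eigenvalues i} ≤ 1) (hk : lam < k) {u : n → ℝ} (hu0 : u ≠ 0)
    (hu : A *ᵥ u = k • u) {x : n → ℝ} (hx : x ⬝ᵥ u = 0) :
    x ⬝ᵥ (A *ᵥ x) ≤ lam * (x ⬝ᵥ x) := by
  set c : n → ℝ := fun i => ⇑(hA.eigenvectorBasis i) ⬝ᵥ x
  set d : n → ℝ := fun i => ⇑(hA.eigenvectorBasis i) ⬝ᵥ u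
  have hd i (hi : d i ≠ 0) : lam < hA.eigenvalues i := by
    have := hA.eigenvectorBasis_dotProduct_mulVec u i
    rw [hu, dotProduct_smul, smul_eq_mul] at this
    exact hk.trans_eq (mul_right_cancel₀ hi this)
  obtain ⟨j, hj⟩ : ∃ j, d j ≠ 0 := by
    by_contra! h
    refine hu0 (dotProduct_self_eq_zero.mp ?_)
    simp [hA.dotProduct_eq_sum_eigenvectorBasis u u, d, h]
  -- `j` is the only index whose eigenvalue exceeds `lam`, and `x ⊥ u` kills its coordinate.
  have hunique i (hi : lam < hA.eigenvalues i) : i = j :=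
    Finset.card_le_one.mp hlam i (by simpa using hi) j (by simpa using hd j hj)
  have hcj : c j = 0 := by
    rw [hA.dotProduct_eq_sum_eigenvectorBasis, Finset.sum_eq_single j] at hx
    · exact (mul_eq_zero.mp hx).resolve_right hj
    · intro i _ hij
      by_cases hi : d i = 0
      · simp [d, hi]
      · exact absurd (hunique i (hd i hi)) hij
    · simp
  rw [hA.dotProduct_eq_sum_eigenvectorBasis x (A *ᵥ x), hA.dotProduct_eq_sum_eigenvectorBasis x x,
    Finset.mul_sum]
  refine Finset.sum_le_sum fun i _ => ?_
  rw [hA.eigenvectorBasis_dotProduct_mulVec]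
  rcases le_or_gt (hA.eigenvalues i) lam with hi | hi
  · nlinarith [mul_self_nonneg (c i)]
  · obtain rfl := hunique i hi
    rw [show ⇑(hA.eigenvectorBasis i) ⬝ᵥ x = 0 from hcj]
    simp

end Matrix.IsHermitian

namespace SimpleGraph

theorem adjMatrix_mulVec_one_of_regular {α : Type} [Fintype α] {G : SimpleGraph α}
    [DecidableRel G.Adj] {k : ℕ} (hG : G.IsRegularOfDegree k) :
    G.adjMatrix ℝ *ᵥ 1 = (k : ℝ) • 1 := by
  ext v
  simpa using adjMatrix_mulVec_const_apply_of_regular (a := (1 : ℝ)) hG (v := v)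

variable {α : Type} [Fintype α] [DecidableEq α] (G : SimpleGraph α) [DecidableRel G.Adj]

noncomputable def secondLargestEig : ℝ := (eigsAsc G).getD (Fintype.card α - 2) 0

theorem card_secondLargestEig_lt_eigenvalues_le_one (hn : 2 ≤ Fintype.card α) :
    #{i | G.secondLargestEig < (adjMatrix_isHermitian G).eigenvalues i} ≤ 1 := by
  have hlen : (eigsAsc G).length = Fintype.card α := by
    rw [eigsAsc, Multiset.length_sort, Multiset.card_map, Finset.card_val, Finset.card_univ]
  have hj : Fintype.card α - 2 < (eigsAsc G).length := by omega
  have hcount := (show (eigsAsc G).Pairwise (· ≤ ·) from Multiset.pairwise_sort _ _)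
    |>.countP_getElem_lt_le _ hj
  rw [hlen, ← List.getD_eq_getElem _ 0 hj] at hcount
  calc #{i | G.secondLargestEig < (adjMatrix_isHermitian G).eigenvalues i}
      = (univ.val.map (adjMatrix_isHermitian G).eigenvalues).countP (G.secondLargestEig < ·) := by
        rw [Multiset.countP_map]; rfl
    _ = (eigsAsc G).countP (G.secondLargestEig < ·) := by
        rw [← Multiset.coe_countP, eigsAsc, Multiset.sort_eq]
    _ ≤ 1 := hcount.trans (by omega)

theorem dotProduct_adjMatrix_mulVec_le {k : ℕ} (hG : G.IsRegularOfDegree k)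
    (hk : G.secondLargestEig < k) (hn : 2 ≤ Fintype.card α) {x : α → ℝ} (hx : ∑ v, x v = 0) :
    x ⬝ᵥ (G.adjMatrix ℝ *ᵥ x) ≤ G.secondLargestEig * (x ⬝ᵥ x) := by
  have : Nonempty α := Fintype.card_pos_iff.mp (by omega)
  exact (adjMatrix_isHermitian G).dotProduct_mulVec_le_of_dotProduct_eigenvector_eq_zero
    (G.card_secondLargestEig_lt_eigenvalues_le_one hn) hk one_ne_zero
    (adjMatrix_mulVec_one_of_regular hG) (by rwa [dotProduct_one])

theorem cutEdges_eq_sum_adjMatrix (S : Finset α) :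
    (cutEdges G S : ℝ) = ∑ u ∈ S, ∑ v ∈ Sᶜ, G.adjMatrix ℝ u v := by
  rw [cutEdges, Finset.card_filter, Finset.sum_product]
  simp [adjMatrix_apply]

theorem cutEdges_singleton (v : α) : cutEdges G {v} = G.degree v := by
  have hdeg : (G.degree v : ℝ) = ∑ w, G.adjMatrix ℝ v w := G.degree_eq_sum_if_adj v
  rw [← Finset.sum_compl_add_sum {v}, sum_singleton, adjMatrix_apply, if_neg (G.irrefl (v := v)),
    add_zero, ← sum_singleton (fun u => ∑ w ∈ {v}ᶜ, G.adjMatrix ℝ u w) v,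
    ← G.cutEdges_eq_sum_adjMatrix] at hdeg
  exact_mod_cast hdeg.symm

theorem sum_sum_adjMatrix_eq_sub_cutEdges {k : ℕ} (hG : G.IsRegularOfDegree k) (S : Finset α) :
    ∑ u ∈ S, ∑ v ∈ S, G.adjMatrix ℝ u v = k * #S - cutEdges G S := by
  have hrow u : ∑ v ∈ S, G.adjMatrix ℝ u v = k - ∑ v ∈ Sᶜ, G.adjMatrix ℝ u v := by
    rw [eq_sub_iff_add_eq, Finset.sum_add_sum_compl, ← hG u, G.degree_eq_sum_if_adj u]
    simp [adjMatrix_apply]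
  rw [cutEdges_eq_sum_adjMatrix, Finset.sum_congr rfl fun u _ => hrow u, Finset.sum_sub_distrib,
    Finset.sum_const, nsmul_eq_mul, mul_comm]

/-- The expander mixing lemma for cuts. -/
theorem sub_secondLargestEig_mul_le_cutEdges {k : ℕ} (hG : G.IsRegularOfDegree k)
    (hk : G.secondLargestEig < k) (hn : 2 ≤ Fintype.card α) (S : Finset α) :
    (k - G.secondLargestEig) * #S * #Sᶜ ≤ Fintype.card α * cutEdges G S := by
  set A := G.adjMatrix ℝ
  set n : ℝ := (Fintype.card α : ℝ)
  set s : ℝ := (#S : ℝ)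
  set ind : α → ℝ := fun v => if v ∈ S then 1 else 0
  have hind (y : α → ℝ) : ind ⬝ᵥ y = ∑ v ∈ S, y v := by
    simp [ind, dotProduct, ite_mul, Finset.sum_ite_mem]
  have hind1 : ind ⬝ᵥ 1 = s := by simp [hind, s]
  have hindind : ind ⬝ᵥ ind = s := by simp [hind, ind, s]
  have hA1 : A *ᵥ 1 = (k : ℝ) • 1 := adjMatrix_mulVec_one_of_regular hG
  have h1Aind : 1 ⬝ᵥ (A *ᵥ ind) = k * s := by
    rw [dotProduct_mulVec, ← mulVec_transpose, transpose_adjMatrix, hA1, smul_dotProduct,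
      dotProduct_comm, hind1, smul_eq_mul]
  have hindAind : ind ⬝ᵥ (A *ᵥ ind) = k * s - cutEdges G S := by
    rw [← G.sum_sum_adjMatrix_eq_sub_cutEdges hG, hind]
    exact Finset.sum_congr rfl fun u _ => by rw [mulVec, dotProduct_comm, hind]
  set x : α → ℝ := n • ind - s • 1
  have hx : ∑ v, x v = 0 := by
    rw [← dotProduct_one, sub_dotProduct, smul_dotProduct, smul_dotProduct, hind1,
      one_dotProduct_one, smul_eq_mul, smul_eq_mul, mul_comm]
    exact sub_self _
  have key := G.dotProduct_adjMatrix_mulVec_le hG hk hn hx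
  simp only [x, mulVec_sub, mulVec_smul, dotProduct_sub, sub_dotProduct, dotProduct_smul,
    smul_dotProduct, smul_eq_mul] at key
  rw [hindAind, h1Aind, hA1, dotProduct_smul, dotProduct_smul, hind1, one_dotProduct_one,
    dotProduct_comm 1 ind, hind1, hindind, smul_eq_mul, smul_eq_mul] at key
  have hSc : (#Sᶜ : ℝ) = n - s := by rw [card_compl, Nat.cast_sub (card_le_univ S)]
  rw [hSc]
  refine le_of_mul_le_mul_left ?_ (by positivity : 0 < n)
  linear_combination key

end SimpleGraph

theorem add_le_one_sub_mul_mul {t s c : ℝ} (hs : 2 ≤ s) (hc : 2 ≤ c)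
    (h : 4 ≤ (s + c) * (1 - 2 * t)) : s + c ≤ (1 - t) * s * c := by
  nlinarith [mul_nonneg (sub_nonneg.2 hs) (sub_nonneg.2 hc)]

theorem card_pair_inter_eq_one_iff {V : Type} [DecidableEq V] {a b : V} (hab : a ≠ b)
    (S : Finset V) : #({a, b} ∩ S) = 1 ↔ (a ∈ S ↔ b ∉ S) := by
  by_cases ha : a ∈ S <;> by_cases hb : b ∈ S <;>
    simp [Finset.insert_inter_of_mem, Finset.insert_inter_of_notMem, ha, hb, hab]

section Complex

variable {V : Type} [DecidableEq V] {E : Finset (Finset V)}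

theorem delta0_empty : delta0 E ∅ = ∅ := by simp [delta0]

theorem delta0_singleton (v : V) : delta0 E {v} = E.filter (v ∈ ·) := by
  refine Finset.filter_congr fun e _ => ?_
  rw [Finset.inter_singleton]
  split_ifs <;> simp [*]

variable [Fintype V]

theorem delta0_compl (hE : ∀ e ∈ E, #e = 2) (S : Finset V) : delta0 E Sᶜ = delta0 E S := by
  refine Finset.filter_congr fun e he => ?_
  have := Finset.card_inter_add_card_sdiff e S
  rw [Finset.sdiff_eq_inter_compl, hE e he] at this
  omega

theorem card_delta0_eq_cutEdges (hE : ∀ e ∈ E, #e = 2) (S : Finset V) :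
    #(delta0 E S) = cutEdges (G0 E) S := by
  rw [cutEdges, eq_comm]
  refine Finset.card_bij (fun p _ => {p.1, p.2}) ?_ ?_ ?_
  · rintro ⟨u, w⟩ hp
    simp only [Finset.mem_filter, Finset.mem_product, Finset.mem_compl] at hp
    obtain ⟨⟨hu, hw⟩, huw, he⟩ := hp
    simp only [delta0, Finset.mem_filter, card_pair_inter_eq_one_iff huw]
    tauto
  · rintro ⟨u, w⟩ hp ⟨u', w'⟩ hp' h
    simp only [Finset.mem_filter, Finset.mem_product, Finset.mem_compl] at hp hp'
    have := congrArg (fun s : Finset V => (s : Set V)) h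
    simp only [Finset.coe_pair, Set.pair_eq_pair_iff] at this
    rcases this with ⟨rfl, rfl⟩ | ⟨rfl, rfl⟩
    · rfl
    · exact absurd hp.1.1 hp'.1.2
  · intro e he
    simp only [delta0, Finset.mem_filter] at he
    obtain ⟨a, b, hab, rfl⟩ := Finset.card_eq_two.mp (hE e he.1)
    rw [card_pair_inter_eq_one_iff hab] at he
    simp only [Finset.mem_filter, Finset.mem_product, Finset.mem_compl, exists_prop, Prod.exists]
    by_cases ha : a ∈ S
    · exact ⟨a, b, ⟨⟨ha, he.2.mp ha⟩, hab, he.1⟩, rfl⟩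
    · exact ⟨b, a, ⟨⟨not_not.mp (mt he.2.mpr ha), ha⟩, hab.symm, Finset.pair_comm a b ▸ he.1⟩,
        Finset.pair_comm b a⟩

variable {k₀ : ℕ}

theorem isRegularOfDegree_G0 (hE : ∀ e ∈ E, #e = 2) (hreg : ∀ v : V, #(E.filter (v ∈ ·)) = k₀) :
    (G0 E).IsRegularOfDegree k₀ := fun v => by
  rw [← SimpleGraph.cutEdges_singleton, ← card_delta0_eq_cutEdges hE, delta0_singleton, hreg]

theorem card_mul_eq_two_mul_card_of_regular (hE : ∀ e ∈ E, #e = 2)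
    (hreg : ∀ v : V, #(E.filter (v ∈ ·)) = k₀) : Fintype.card V * k₀ = 2 * #E := by
  have := Finset.sum_card_bipartiteAbove_eq_sum_card_bipartiteBelow (s := univ) (t := E)
    (r := fun v e => v ∈ e)
  simp only [Finset.bipartiteAbove, Finset.bipartiteBelow, hreg, Finset.filter_mem_eq_inter,
    Finset.univ_inter] at this
  rw [Finset.sum_congr rfl hE] at this
  simpa [mul_comm] using this

theorem le_card_delta0_of_ne_empty (hE : ∀ e ∈ E, #e = 2)
    (hreg : ∀ v : V, #(E.filter (v ∈ ·)) = k₀) (hlam : normEig (G0 E) k₀ 2 < 1 / 2)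
    (hV : 4 / (1 - 2 * normEig (G0 E) k₀ 2) ≤ Fintype.card V)
    {S : Finset V} (hS : delta0 E S ≠ ∅) : k₀ ≤ #(delta0 E S) := by
  rcases Nat.eq_zero_or_pos k₀ with rfl | hk₀
  · exact Nat.zero_le _
  have hS0 : 0 < #S := card_pos.2 (nonempty_iff_ne_empty.2 (by rintro rfl; exact hS delta0_empty))
  have hSc0 : 0 < #Sᶜ := card_pos.2 (nonempty_iff_ne_empty.2 fun h => by
    rw [← delta0_compl hE, h, delta0_empty] at hS; exact hS rfl)
  rcases (by omega : #S = 1 ∨ #Sᶜ = 1 ∨ (2 ≤ #S ∧ 2 ≤ #Sᶜ)) with h | h | ⟨hs, hc⟩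
  · obtain ⟨v, rfl⟩ := card_eq_one.1 h
    rw [delta0_singleton, hreg]
  · obtain ⟨v, hv⟩ := card_eq_one.1 h
    rw [← delta0_compl hE, hv, delta0_singleton, hreg]
  have hk₀' : (0 : ℝ) < k₀ := by exact_mod_cast hk₀
  have hsecond : (G0 E).secondLargestEig = normEig (G0 E) k₀ 2 * k₀ :=
    (div_mul_cancel₀ _ hk₀'.ne').symm
  set t := normEig (G0 E) k₀ 2
  have hcard := card_add_card_compl S
  have hn : (Fintype.card V : ℝ) = #S + #Sᶜ := by exact_mod_cast hcard.symm
  have hgap : 4 ≤ (#S + #Sᶜ : ℝ) * (1 - 2 * t) := by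
    rwa [div_le_iff₀ (by linarith), hn] at hV
  have hmix := (G0 E).sub_secondLargestEig_mul_le_cutEdges (isRegularOfDegree_G0 hE hreg)
    (by rw [hsecond]; nlinarith) (by omega) S
  rw [← card_delta0_eq_cutEdges hE, hsecond, hn] at hmix
  have harith := add_le_one_sub_mul_mul (t := t) (s := #S) (c := #Sᶜ) (by exact_mod_cast hs)
    (by exact_mod_cast hc) hgap
  have : (#S + #Sᶜ : ℝ) * k₀ ≤ (#S + #Sᶜ) * #(delta0 E S) := by nlinarith
  exact_mod_cast le_of_mul_le_mul_left this (by positivity)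

end Complex

theorem card_le_sdist {α : Type} [DecidableEq α] {A z : Finset α} {k : ℕ} (hA : 2 * #A ≤ k)
    (hz : z = ∅ ∨ k ≤ #z) : #A ≤ sdist A z := by
  rcases hz with rfl | hz
  · simp [sdist]
  · have := card_le_card_sdiff_add_card (s := z) (t := A)
    unfold sdist
    omega

theorem card_le_famDist {α : Type} [DecidableEq α] {A : Finset α} {Z : Set (Finset α)}
    (hZ : Z.Nonempty) (h : ∀ z ∈ Z, #A ≤ sdist A z) : #A ≤ famDist A Z :=
  le_csInf (hZ.elim fun z hz => ⟨_, z, hz, rfl⟩) (by rintro _ ⟨z, hz, rfl⟩; exact h z hz)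

theorem empty_mem_Z1 {V : Type} [DecidableEq V] (E T : Finset (Finset V)) : ∅ ∈ Z1 E T :=
  ⟨empty_subset E, by simp [delta1]⟩

theorem eq_empty_or_le_card_of_mem_Z1 {V : Type} [Fintype V] [DecidableEq V]
    {E T : Finset (Finset V)} {k₀ k₁ : ℕ} {ε μ : ℝ} (hexp : IsCosystolicExpander E T k₀ k₁ ε μ)
    (hcut : ∀ S, delta0 E S ≠ ∅ → k₀ ≤ #(delta0 E S)) (hμE : k₀ ≤ μ * #E)
    {z : Finset (Finset V)} (hz : z ∈ Z1 E T) : z = ∅ ∨ k₀ ≤ #z := by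
  rcases (hexp.2 z hz.1).1 hz.2 with ⟨S, rfl⟩ | hbig
  · by_cases hS : delta0 E S = ∅
    exacts [Or.inl hS, Or.inr (hcut S hS)]
  · exact Or.inr (by exact_mod_cast hμE.trans hbig)

theorem coboundary_of_local_view_of_nonfat_vertex_general
    {V : Type} [Fintype V] [DecidableEq V] (E T : Finset (Finset V))
    (k₀ k₁ : ℕ) (ε μ : ℝ) (hε : 0 < ε) (hμ : 0 < μ)
    (hX : IsComplex E T) (hreg : IsRegularComplex E T k₀ k₁)
    (hexp : IsCosystolicExpander E T k₀ k₁ ε μ)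
    (hV : max (4 / (1 - 2 * normEig (G0 E) k₀ 2)) (3 / μ) ≤ (Fintype.card V : ℝ))
    (hlam : normEig (G0 E) k₀ 2 < 1 / 2)
    (F : Finset (Finset V)) (hF : F ⊆ E) (v : V)
    (hnonfat : ((localView F v).card : ℝ) ≤ (k₀ : ℝ) / 2) :
    ε * (k₁ : ℝ) * ((localView F v).card : ℝ) ≤ ((delta1 T (localView F v)).card : ℝ) := by
  set Fv := localView F v
  have hcut S := le_card_delta0_of_ne_empty hX.1 hreg.1 hlam ((le_max_left _ _).trans hV) (S := S)
  have hμE : (k₀ : ℝ) ≤ μ * #E := by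
    have hμn : 3 ≤ μ * Fintype.card V := by
      rw [← div_le_iff₀' hμ]; exact (le_max_right _ _).trans hV
    have hE : (Fintype.card V : ℝ) * k₀ = 2 * #E := by
      exact_mod_cast card_mul_eq_two_mul_card_of_regular hX.1 hreg.1
    nlinarith
  have hFv : 2 * #Fv ≤ k₀ := by
    have : 2 * (#Fv : ℝ) ≤ k₀ := by linarith
    exact_mod_cast this
  have hdist z (hz : z ∈ Z1 E T) : #Fv ≤ sdist Fv z :=
    card_le_sdist hFv (eq_empty_or_le_card_of_mem_Z1 hexp hcut hμE hz)
  have hFvE : Fv ⊆ E := (filter_subset _ F).trans hF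
  by_cases hδ : delta1 T Fv = ∅
  · have hFv0 : #Fv = 0 := by simpa [sdist] using hdist Fv ⟨hFvE, hδ⟩
    rw [hFv0, Nat.cast_zero, mul_zero]
    positivity
  · calc ε * k₁ * #Fv ≤ ε * k₁ * famDist Fv (Z1 E T) := by
          gcongr
          exact_mod_cast card_le_famDist ⟨∅, empty_mem_Z1 E T⟩ hdist
      _ ≤ #(delta1 T Fv) := (hexp.2 Fv hFvE).2 hδ

theorem coboundary_of_local_view_of_nonfat_vertex
    {V : Type} [Fintype V] [DecidableEq V] (E T : Finset (Finset V))
    (k₀ k₁ : ℕ) (ε μ : ℝ) (hε : 0 < ε) (hμ : 0 < μ)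
    (hX : IsComplex E T) (hreg : IsRegularComplex E T k₀ k₁)
    (hexp : IsCosystolicExpander E T k₀ k₁ ε μ)
    (hV : max (4 / (1 - 2 * normEig (G0 E) k₀ 2)) (3 / μ) ≤ (Fintype.card V : ℝ))
    (hlam : normEig (G0 E) k₀ 2 < 1 / 2)
    (F : Finset (Finset V)) (hF : F ⊆ E) (hF0 : F ≠ ∅) (hFE : F ≠ E) (v : V)
    (hnonfat : ((localView F v).card : ℝ) ≤ (k₀ : ℝ) / 2) :
    ε * (k₁ : ℝ) * ((localView F v).card : ℝ) ≤ ((delta1 T (localView F v)).card : ℝ) :=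
  coboundary_of_local_view_of_nonfat_vertex_general E T k₀ k₁ ε μ hε hμ hX hreg hexp hV hlam F hF v
    hnonfat
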